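/- arXiv:1707.05712 — 2 statements merged into one kernel-verified Lean document; each statement's English description precedes it below -/
import Mathlib

section
/- Joint-error transfer lemma (key step of Theorem 4): for any source domain S and target domain T over X×Y, any q > 1, and any probability measure ρ on H, e_T(ρ) ≤ β_q · [e_S(ρ)]^{1−1/q} + η_{T∖S}. -/
/-!
Decompose `T = T_⊥ + (dT_A/dS) • S`. Since the product of the two losses is at most the loss
of the first hypothesis, the singular part contributes at most `η_{T∖S}`. On the absolutely
continuous part, Hölder's inequality on `(ρ ⊗ ρ) ⊗ S` with exponents `q` and `q'` bounds the
contribution by `β_q (∫ g^{q'})^{1/q'}`, where `g` is the product of the two losses; as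
`0 ≤ g ≤ 1` and `q' ≥ 1`, `g^{q'} ≤ g`, which turns the second factor into `e_S(ρ)^{1-1/q}`.
-/

open MeasureTheory Real

noncomputable section

/-- The 0-1 loss on labels in `{−1,+1}`, encoded by `Bool` (`false ↦ −1`, `true ↦ +1`). -/
def l01 (a b : Bool) : ℝ := if a = b then 0 else 1

variable {X H : Type*} [MeasurableSpace X] [MeasurableSpace H]

/-- The expected joint error `e_P(ρ) = E_{(h,h')~ρ⊗ρ} E_{(x,y)~P} ℓ(h(x),y)·ℓ(h'(x),y)`. -/
def jointErr (F : H → X → Bool) (P : Measure (X × Bool)) (ρ : Measure H) : ℝ :=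
  ∫ p, ∫ z, l01 (F p.1 z.1) z.2 * l01 (F p.2 z.1) z.2 ∂P ∂(ρ.prod ρ)

/-- `β_q = (∫ (dT_A/dS)^q dS)^{1/q}`, where `T_A` is the absolutely continuous part of the
Lebesgue decomposition of `T` with respect to `S`, so that `dT_A/dS = T.rnDeriv S`. -/
def betaQ (S T : Measure (X × Bool)) (q : ℝ) : ℝ :=
  (∫ z, (T.rnDeriv S z).toReal ^ q ∂S) ^ (1 / q)

/-- `η_{T∖S} = sup_{h∈H} ∫ ℓ(h(x),y) dT_⊥(x,y)`, where `T_⊥ = T.singularPart S` is the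
part of `T` singular with respect to `S`. -/
def etaTS (F : H → X → Bool) (S T : Measure (X × Bool)) : ℝ :=
  ⨆ h : H, ∫ z, l01 (F h z.1) z.2 ∂(T.singularPart S)

open scoped ENNReal

namespace ENNReal

variable {α : Type*} [MeasurableSpace α]

theorem lintegral_mul_le_rpow_mul_rpow_of_le_one {μ : Measure α} {p : ℝ} (hp : 1 < p)
    {f g : α → ℝ≥0∞} (hf : AEMeasurable f μ) (hg : AEMeasurable g μ)
    (hg_le : ∀ᵐ a ∂μ, g a ≤ 1) :
    ∫⁻ a, f a * g a ∂μ ≤ (∫⁻ a, f a ^ p ∂μ) ^ (1 / p) * (∫⁻ a, g a ∂μ) ^ (1 - 1 / p) := by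
  have hpq := Real.HolderConjugate.conjExponent hp
  set p' := p.conjExponent
  have hexp : 1 / p' = 1 - 1 / p := by rw [one_div, one_div, hpq.one_sub_inv]
  calc ∫⁻ a, f a * g a ∂μ
      ≤ (∫⁻ a, f a ^ p ∂μ) ^ (1 / p) * (∫⁻ a, g a ^ p' ∂μ) ^ (1 / p') :=
        lintegral_mul_le_Lp_mul_Lq μ hpq hf hg
    _ ≤ (∫⁻ a, f a ^ p ∂μ) ^ (1 / p) * (∫⁻ a, g a ∂μ) ^ (1 - 1 / p) := by
        rw [hexp]
        refine mul_le_mul_right (rpow_le_rpow ?_ (hexp ▸ hpq.symm.one_div_nonneg)) _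
        exact lintegral_mono_ae <| hg_le.mono fun a ha => rpow_le_self_of_le_one ha hpq.symm.lt.le

end ENNReal

namespace MeasureTheory.Measure

variable {α β : Type*} [MeasurableSpace α] [MeasurableSpace β]

theorem lintegral_eq_singularPart_add_rnDeriv_mul (μ ν : Measure α)
    [ν.HaveLebesgueDecomposition μ] {g : α → ℝ≥0∞} (hg : Measurable g) :
    ∫⁻ a, g a ∂ν = ∫⁻ a, g a ∂ν.singularPart μ + ∫⁻ a, ν.rnDeriv μ a * g a ∂μ := by
  conv_lhs => rw [ν.haveLebesgueDecomposition_add μ]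
  rw [lintegral_add_measure, lintegral_withDensity_eq_lintegral_mul _ (ν.measurable_rnDeriv μ) hg]
  rfl

theorem lintegral_lintegral_le_rnDeriv_rpow_mul_add (μ ν : Measure α) [SFinite μ]
    [ν.HaveLebesgueDecomposition μ] (κ : Measure β) [IsProbabilityMeasure κ]
    {G : β × α → ℝ≥0∞} (hG : Measurable G) (hG_le : ∀ w, G w ≤ 1) {q : ℝ} (hq : 1 < q)
    {η : ℝ≥0∞} (hη : ∀ b, ∫⁻ a, G (b, a) ∂ν.singularPart μ ≤ η) :
    ∫⁻ b, ∫⁻ a, G (b, a) ∂ν ∂κ ≤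
      (∫⁻ a, ν.rnDeriv μ a ^ q ∂μ) ^ (1 / q) * (∫⁻ b, ∫⁻ a, G (b, a) ∂μ ∂κ) ^ (1 - 1 / q)
        + η := by
  have hf : Measurable fun w : β × α => ν.rnDeriv μ w.2 :=
    (ν.measurable_rnDeriv μ).comp measurable_snd
  have hfq : ∫⁻ w, ν.rnDeriv μ w.2 ^ q ∂κ.prod μ = ∫⁻ a, ν.rnDeriv μ a ^ q ∂μ := by
    rw [lintegral_prod _ (hf.pow_const q).aemeasurable]
    simp
  calc ∫⁻ b, ∫⁻ a, G (b, a) ∂ν ∂κ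
      = ∫⁻ b, ∫⁻ a, G (b, a) ∂ν.singularPart μ ∂κ
          + ∫⁻ w, ν.rnDeriv μ w.2 * G w ∂κ.prod μ := by
        have hsplit (b : β) : ∫⁻ a, G (b, a) ∂ν = ∫⁻ a, G (b, a) ∂ν.singularPart μ
            + ∫⁻ a, ν.rnDeriv μ a * G (b, a) ∂μ :=
          lintegral_eq_singularPart_add_rnDeriv_mul μ ν (hG.comp measurable_prodMk_left)
        simp_rw [hsplit]
        have hfG : Measurable fun w : β × α => ν.rnDeriv μ w.2 * G w := hf.mul hG
        rw [lintegral_prod _ hfG.aemeasurable]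
        exact lintegral_add_right _ hfG.lintegral_prod_right'
    _ ≤ η + (∫⁻ w, ν.rnDeriv μ w.2 ^ q ∂κ.prod μ) ^ (1 / q)
          * (∫⁻ w, G w ∂κ.prod μ) ^ (1 - 1 / q) := by
        gcongr ?_ + ?_
        · exact (lintegral_mono hη).trans_eq (by rw [lintegral_const, measure_univ, mul_one])
        · exact ENNReal.lintegral_mul_le_rpow_mul_rpow_of_le_one hq hf.aemeasurable
            hG.aemeasurable (ae_of_all _ hG_le)
    _ = _ := by rw [hfq, lintegral_prod _ hG.aemeasurable, add_comm]

theorem integral_toReal_rnDeriv_rpow (μ ν : Measure α) [SigmaFinite ν] {q : ℝ} (hq : 0 ≤ q) :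
    ∫ a, (ν.rnDeriv μ a).toReal ^ q ∂μ = (∫⁻ a, ν.rnDeriv μ a ^ q ∂μ).toReal := by
  simp_rw [ENNReal.toReal_rpow]
  exact integral_toReal ((ν.measurable_rnDeriv μ).pow_const q).aemeasurable
    ((ν.rnDeriv_lt_top μ).mono fun a ha => ENNReal.rpow_lt_top_of_nonneg hq ha.ne)

theorem lintegral_rnDeriv_rpow_ne_top (μ ν : Measure α) [SigmaFinite ν] {q : ℝ} (hq : 0 ≤ q)
    (h : Integrable (fun a => (ν.rnDeriv μ a).toReal ^ q) μ) :
    ∫⁻ a, ν.rnDeriv μ a ^ q ∂μ ≠ ⊤ := by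
  refine ne_of_eq_of_ne (lintegral_congr_ae ?_) h.lintegral_lt_top.ne
  filter_upwards [ν.rnDeriv_lt_top μ] with a ha
  rw [← ENNReal.ofReal_rpow_of_nonneg ENNReal.toReal_nonneg hq, ENNReal.ofReal_toReal ha.ne]

end MeasureTheory.Measure

namespace MeasureTheory

theorem integral_integral_eq_toReal_lintegral_lintegral {α β : Type*} [MeasurableSpace α]
    [MeasurableSpace β] (κ : Measure β) (μ : Measure α) [IsFiniteMeasure μ] {φ : β × α → ℝ}
    (hφ : Measurable φ) (hφ_nonneg : ∀ w, 0 ≤ φ w) (hφ_le : ∀ w, φ w ≤ 1) :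
    ∫ b, ∫ a, φ (b, a) ∂μ ∂κ = (∫⁻ b, ∫⁻ a, ENNReal.ofReal (φ (b, a)) ∂μ ∂κ).toReal := by
  have hinner (b : β) :
      ∫ a, φ (b, a) ∂μ = (∫⁻ a, ENNReal.ofReal (φ (b, a)) ∂μ).toReal :=
    integral_eq_lintegral_of_nonneg_ae (ae_of_all _ fun a => hφ_nonneg _)
      (hφ.comp measurable_prodMk_left).aestronglyMeasurable
  simp_rw [hinner]
  refine integral_toReal (ENNReal.measurable_ofReal.comp hφ).lintegral_prod_right'.aemeasurable
    (ae_of_all _ fun b => ?_)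
  calc ∫⁻ a, ENNReal.ofReal (φ (b, a)) ∂μ ≤ ∫⁻ _, 1 ∂μ :=
        lintegral_mono fun a => ENNReal.ofReal_le_one.2 (hφ_le _)
    _ < ⊤ := by simp

end MeasureTheory

theorem l01_nonneg (a b : Bool) : 0 ≤ l01 a b := by
  unfold l01; split_ifs <;> norm_num

theorem l01_le_one (a b : Bool) : l01 a b ≤ 1 := by
  unfold l01; split_ifs <;> norm_num

theorem Measurable.l01 {Z : Type*} [MeasurableSpace Z] {a b : Z → Bool} (ha : Measurable a)
    (hb : Measurable b) : Measurable fun z => l01 (a z) (b z) :=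
  (Measurable.of_discrete (f := fun c : Bool × Bool => _root_.l01 c.1 c.2)).comp (ha.prodMk hb)

def pairLoss (F : H → X → Bool) (w : (H × H) × (X × Bool)) : ℝ :=
  l01 (F w.1.1 w.2.1) w.2.2 * l01 (F w.1.2 w.2.1) w.2.2

section pairLoss

variable {F : H → X → Bool}

omit [MeasurableSpace X] [MeasurableSpace H] in
theorem pairLoss_nonneg (w : (H × H) × (X × Bool)) : 0 ≤ pairLoss F w :=
  mul_nonneg (l01_nonneg _ _) (l01_nonneg _ _)

omit [MeasurableSpace X] [MeasurableSpace H] in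
theorem pairLoss_le_l01 (w : (H × H) × (X × Bool)) :
    pairLoss F w ≤ l01 (F w.1.1 w.2.1) w.2.2 :=
  mul_le_of_le_one_right (l01_nonneg _ _) (l01_le_one _ _)

omit [MeasurableSpace X] [MeasurableSpace H] in
theorem pairLoss_le_one (w : (H × H) × (X × Bool)) : pairLoss F w ≤ 1 :=
  (pairLoss_le_l01 w).trans (l01_le_one _ _)

theorem measurable_pairLoss (hF : Measurable (Function.uncurry F)) : Measurable (pairLoss F) :=
  ((hF.comp (measurable_fst.fst.prodMk measurable_snd.fst)).l01 measurable_snd.snd).mul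
    ((hF.comp (measurable_fst.snd.prodMk measurable_snd.fst)).l01 measurable_snd.snd)

theorem jointErr_eq_toReal_lintegral (hF : Measurable (Function.uncurry F)) (P : Measure (X × Bool))
    [IsFiniteMeasure P] (ρ : Measure H) :
    jointErr F P ρ = (∫⁻ p, ∫⁻ z, ENNReal.ofReal (pairLoss F (p, z)) ∂P ∂ρ.prod ρ).toReal :=
  integral_integral_eq_toReal_lintegral_lintegral _ P (measurable_pairLoss hF) pairLoss_nonneg
    pairLoss_le_one

omit [MeasurableSpace H] in
theorem etaTS_nonneg (S T : Measure (X × Bool)) : 0 ≤ etaTS F S T :=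
  Real.iSup_nonneg fun _ => integral_nonneg fun _ => l01_nonneg _ _

omit [MeasurableSpace H] in
theorem integral_l01_le_etaTS (S T : Measure (X × Bool)) [IsFiniteMeasure T] (h : H) :
    ∫ z, l01 (F h z.1) z.2 ∂T.singularPart S ≤ etaTS F S T := by
  refine le_ciSup (f := fun h => ∫ z, l01 (F h z.1) z.2 ∂T.singularPart S)
    ⟨1 * (T.singularPart S).real Set.univ, ?_⟩ h
  rintro _ ⟨h', rfl⟩
  refine (Real.le_norm_self _).trans (norm_integral_le_of_norm_le_const (ae_of_all _ fun z => ?_))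
  rw [Real.norm_of_nonneg (l01_nonneg _ _)]
  exact l01_le_one _ _

theorem lintegral_pairLoss_singularPart_le (hF : Measurable (Function.uncurry F))
    (S T : Measure (X × Bool)) [IsFiniteMeasure T] (p : H × H) :
    ∫⁻ z, ENNReal.ofReal (pairLoss F (p, z)) ∂T.singularPart S ≤ ENNReal.ofReal (etaTS F S T) :=
  have hl01 : Measurable fun z : X × Bool => l01 (F p.1 z.1) z.2 :=
    (hF.comp (measurable_const.prodMk measurable_fst)).l01 measurable_snd
  calc ∫⁻ z, ENNReal.ofReal (pairLoss F (p, z)) ∂T.singularPart S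
      ≤ ∫⁻ z, ENNReal.ofReal (l01 (F p.1 z.1) z.2) ∂T.singularPart S :=
        lintegral_mono fun z => ENNReal.ofReal_le_ofReal (pairLoss_le_l01 _)
    _ = ENNReal.ofReal (∫ z, l01 (F p.1 z.1) z.2 ∂T.singularPart S) :=
        (ofReal_integral_eq_lintegral_ofReal
          (.of_bound hl01.aestronglyMeasurable 1 (ae_of_all _ fun z => by
            rw [Real.norm_of_nonneg (l01_nonneg _ _)]; exact l01_le_one _ _))
          (ae_of_all _ fun _ => l01_nonneg _ _)).symm
    _ ≤ ENNReal.ofReal (etaTS F S T) := ENNReal.ofReal_le_ofReal (integral_l01_le_etaTS S T p.1)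

end pairLoss

/-- Joint-error transfer lemma (key step of Theorem 4): for any source domain `S` and target
domain `T`, any `q > 1` (with `β_q` finite, i.e. `(dT_A/dS)^q` is `S`-integrable), and any
probability measure `ρ` on `H`, `e_T(ρ) ≤ β_q · [e_S(ρ)]^{1−1/q} + η_{T∖S}`. -/
theorem joint_error_transfer
    (F : H → X → Bool) (hF : Measurable (Function.uncurry F))
    (S T : Measure (X × Bool)) [IsProbabilityMeasure S] [IsProbabilityMeasure T]
    (q : ℝ) (hq : 1 < q)
    (hβ : Integrable (fun z => (T.rnDeriv S z).toReal ^ q) S)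
    (ρ : Measure H) [IsProbabilityMeasure ρ] :
    jointErr F T ρ ≤ betaQ S T q * (jointErr F S ρ) ^ (1 - 1 / q) + etaTS F S T := by
  set G : (H × H) × (X × Bool) → ℝ≥0∞ := fun w => ENNReal.ofReal (pairLoss F w)
  have hG : Measurable G := ENNReal.measurable_ofReal.comp (measurable_pairLoss hF)
  have hG_le (w) : G w ≤ 1 := ENNReal.ofReal_le_one.2 (pairLoss_le_one w)
  have hq_pos : 0 < q := zero_lt_one.trans hq
  have hB := S.lintegral_rnDeriv_rpow_ne_top T hq_pos.le hβ
  have hE : ∫⁻ p, ∫⁻ z, G (p, z) ∂S ∂ρ.prod ρ ≠ ⊤ := by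
    refine ne_top_of_le_ne_top ENNReal.one_ne_top ?_
    calc ∫⁻ p, ∫⁻ z, G (p, z) ∂S ∂ρ.prod ρ ≤ ∫⁻ _, ∫⁻ _, 1 ∂S ∂ρ.prod ρ :=
          lintegral_mono fun p => lintegral_mono fun z => hG_le _
      _ = 1 := by simp
  have hfin : (∫⁻ z, T.rnDeriv S z ^ q ∂S) ^ (1 / q)
      * (∫⁻ p, ∫⁻ z, G (p, z) ∂S ∂ρ.prod ρ) ^ (1 - 1 / q) ≠ ⊤ :=
    ENNReal.mul_ne_top (ENNReal.rpow_ne_top_of_nonneg (by positivity) hB)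
      (ENNReal.rpow_ne_top_of_nonneg (sub_nonneg.2 ((div_le_one hq_pos).2 hq.le)) hE)
  have key := S.lintegral_lintegral_le_rnDeriv_rpow_mul_add T (ρ.prod ρ) hG hG_le hq
    (lintegral_pairLoss_singularPart_le hF S T)
  rw [jointErr_eq_toReal_lintegral hF, jointErr_eq_toReal_lintegral hF, betaQ,
    S.integral_toReal_rnDeriv_rpow T hq_pos.le, ENNReal.toReal_rpow]
  refine (ENNReal.toReal_mono (ENNReal.add_ne_top.2 ⟨hfin, ENNReal.ofReal_ne_top⟩) key).trans_eq ?_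
  rw [ENNReal.toReal_add hfin ENNReal.ofReal_ne_top, ENNReal.toReal_mul, ENNReal.toReal_rpow,
    ENNReal.toReal_ofReal (etaTS_nonneg S T)]

end
end

section
/- Corollary 1(ii) (generalization bound on the source expected joint error): for any source domain S over X×Y, any prior probability measure π on H, any δ ∈ (0,1], and any b > 0, with probability at least 1−δ over the draw of S = {(x_i,y_i)}_{i=1}^{m_s} ~ S^{m_s}, simultaneously for every probability measure ρ on H: e_S(ρ) ≤ (b/(1−e^{−b})) · [ ê_S(ρ) + (2·KL(ρ‖π) + ln(1/δ)) / (m_s·b) ]. -/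
/-!
Catoni's PAC-Bayes argument, run on pairs `θ = (h, h') ∈ H × H` with the `[0,1]`-valued loss
`ℓ(h(x),y)·ℓ(h'(x),y)`, prior `π ⊗ π` and posterior `ρ ⊗ ρ`; the factor `2` is
`KL(ρ ⊗ ρ ‖ π ⊗ π) = 2 KL(ρ ‖ π)`.

For a loss with values in `[0,1]`, convexity gives `e^{-bℓ} ≤ 1 - cℓ` with `c = 1 - e^{-b}`, so
`f_s(θ) = -m log(1 - c·risk θ) - b ∑ᵢ ℓ(θ, sᵢ)` satisfies `E_s e^{f_s(θ)} ≤ 1` for every `θ`.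
By Fubini `E_s E_π e^{f_s} ≤ 1`, so by Markov `E_π e^{f_s} < 1/δ` with probability `≥ 1 - δ`.
On that event the Donsker–Varadhan inequality `E_ρ f_s ≤ KL(ρ‖π) + log E_π e^{f_s}`, combined
with `-log(1 - c r) ≥ c r`, gives the bound for every posterior `ρ` at once.
-/
open MeasureTheory

noncomputable section

variable {X H : Type*} [MeasurableSpace X] [MeasurableSpace H]

/-- The Kullback–Leibler divergence `KL(ρ‖π) = E_{h~ρ} ln(dρ/dπ)` (for `ρ ≪ π` with
integrable log-likelihood ratio, i.e. the cases where `KL(ρ‖π) < +∞`). -/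
def klReal (ρ π : Measure H) : ℝ := ∫ h, llr ρ π h ∂ρ

section MeasureFacts

variable {α β : Type*} [MeasurableSpace α] [MeasurableSpace β]

lemma ae_toReal_rnDeriv_pos {μ ν : Measure α} [SigmaFinite μ] [SigmaFinite ν] (h : μ ≪ ν) :
    ∀ᵐ x ∂μ, 0 < (μ.rnDeriv ν x).toReal := by
  filter_upwards [Measure.rnDeriv_pos h, h.ae_le (Measure.rnDeriv_lt_top μ ν)] with x hx hx'
  exact ENNReal.toReal_pos hx.ne' hx'.ne

/-- Donsker–Varadhan: Gibbs' inequality for `μ` against the tilted measure `ν.tilted f`. -/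
theorem integral_le_integral_llr_add_log_integral_exp {μ ν : Measure α} [IsProbabilityMeasure μ]
    [IsProbabilityMeasure ν] {f : α → ℝ}
    (hμν : μ ≪ ν) (hfμ : Integrable f μ) (hfν : Integrable (fun x => Real.exp (f x)) ν)
    (h_int : Integrable (llr μ ν) μ) :
    ∫ x, f x ∂μ ≤ ∫ x, llr μ ν x ∂μ + Real.log (∫ x, Real.exp (f x) ∂ν) := by
  have : IsProbabilityMeasure (ν.tilted f) := isProbabilityMeasure_tilted hfν
  have gibbs := InformationTheory.integral_llr_add_sub_measure_univ_nonneg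
    (hμν.trans (absolutelyContinuous_tilted hfν)) (integrable_llr_tilted_right hμν hfμ h_int hfν)
  rw [integral_llr_tilted_right hμν hfμ hfν h_int] at gibbs
  simp only [probReal_univ, add_sub_cancel_right] at gibbs
  linarith

lemma ofReal_one_sub_le_measure_lt_one_div_of_integral_le_one {μ : Measure α}
    [IsProbabilityMeasure μ] {A : α → ℝ} (hA_nonneg : 0 ≤ᵐ[μ] A) (hA_int : Integrable A μ)
    (hA_le : ∫ x, A x ∂μ ≤ 1) {δ : ℝ} (hδ : 0 < δ) :
    ENNReal.ofReal (1 - δ) ≤ μ {x | A x < 1 / δ} := by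
  have markov : μ {x | 1 / δ ≤ A x} ≤ ENNReal.ofReal δ := by
    have h := (mul_meas_ge_le_integral_of_nonneg hA_nonneg hA_int (1 / δ)).trans hA_le
    rw [measureReal_def, one_div_mul_eq_div, div_le_one hδ] at h
    rwa [ENNReal.le_ofReal_iff_toReal_le (measure_ne_top _ _) hδ.le]
  have cover : (1 : ENNReal) ≤ μ {x | A x < 1 / δ} + μ {x | 1 / δ ≤ A x} := by
    calc (1 : ENNReal) = μ ({x | A x < 1 / δ} ∪ {x | 1 / δ ≤ A x}) := by
          rw [← measure_univ (μ := μ)]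
          congr 1
          ext x
          simp [lt_or_ge]
      _ ≤ _ := measure_union_le _ _
  rw [ENNReal.ofReal_sub _ hδ.le, ENNReal.ofReal_one, tsub_le_iff_right]
  exact cover.trans (by gcongr)

variable {μ₁ ν₁ : Measure α} {μ₂ ν₂ : Measure β}

lemma rnDeriv_prod_ae [SigmaFinite μ₁] [SigmaFinite ν₁] [SigmaFinite μ₂] [SigmaFinite ν₂]
    (h₁ : μ₁ ≪ ν₁) (h₂ : μ₂ ≪ ν₂) :
    (μ₁.prod μ₂).rnDeriv (ν₁.prod ν₂)
      =ᵐ[ν₁.prod ν₂] fun z => μ₁.rnDeriv ν₁ z.1 * μ₂.rnDeriv ν₂ z.2 := by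
  have h_prod : μ₁.prod μ₂ = (ν₁.prod ν₂).withDensity
      (fun z => μ₁.rnDeriv ν₁ z.1 * μ₂.rnDeriv ν₂ z.2) := by
    rw [← prod_withDensity (Measure.measurable_rnDeriv _ _) (Measure.measurable_rnDeriv _ _),
      Measure.withDensity_rnDeriv_eq _ _ h₁, Measure.withDensity_rnDeriv_eq _ _ h₂]
  rw [h_prod]
  exact Measure.rnDeriv_withDensity _ (by fun_prop)

lemma llr_prod_ae [SigmaFinite μ₁] [SigmaFinite ν₁] [SigmaFinite μ₂] [SigmaFinite ν₂]
    (h₁ : μ₁ ≪ ν₁) (h₂ : μ₂ ≪ ν₂) :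
    llr (μ₁.prod μ₂) (ν₁.prod ν₂) =ᵐ[μ₁.prod μ₂] fun z => llr μ₁ ν₁ z.1 + llr μ₂ ν₂ z.2 := by
  filter_upwards [(h₁.prod h₂).ae_le (rnDeriv_prod_ae h₁ h₂),
    Measure.quasiMeasurePreserving_fst.ae (ae_toReal_rnDeriv_pos h₁),
    Measure.quasiMeasurePreserving_snd.ae (ae_toReal_rnDeriv_pos h₂)] with z hz hz₁ hz₂
  rw [llr, hz, ENNReal.toReal_mul, Real.log_mul hz₁.ne' hz₂.ne', llr, llr]

lemma integrable_llr_prod [IsProbabilityMeasure μ₁] [SigmaFinite ν₁] [IsProbabilityMeasure μ₂]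
    [SigmaFinite ν₂] (h₁ : μ₁ ≪ ν₁) (h₂ : μ₂ ≪ ν₂) (hi₁ : Integrable (llr μ₁ ν₁) μ₁)
    (hi₂ : Integrable (llr μ₂ ν₂) μ₂) :
    Integrable (llr (μ₁.prod μ₂) (ν₁.prod ν₂)) (μ₁.prod μ₂) :=
  ((hi₁.comp_fst μ₂).add (hi₂.comp_snd μ₁)).congr (llr_prod_ae h₁ h₂).symm

lemma integral_llr_prod [IsProbabilityMeasure μ₁] [SigmaFinite ν₁] [IsProbabilityMeasure μ₂]
    [SigmaFinite ν₂] (h₁ : μ₁ ≪ ν₁) (h₂ : μ₂ ≪ ν₂) (hi₁ : Integrable (llr μ₁ ν₁) μ₁)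
    (hi₂ : Integrable (llr μ₂ ν₂) μ₂) :
    ∫ z, llr (μ₁.prod μ₂) (ν₁.prod ν₂) z ∂(μ₁.prod μ₂)
      = ∫ x, llr μ₁ ν₁ x ∂μ₁ + ∫ y, llr μ₂ ν₂ y ∂μ₂ := by
  rw [integral_congr_ae (llr_prod_ae h₁ h₂), integral_add (hi₁.comp_fst μ₂) (hi₂.comp_snd μ₁),
    integral_fun_fst, integral_fun_snd]
  simp

end MeasureFacts

lemma exp_neg_mul_le_one_sub_mul (b : ℝ) {x : ℝ} (hx : x ∈ Set.Icc (0 : ℝ) 1) :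
    Real.exp (-b * x) ≤ 1 - (1 - Real.exp (-b)) * x := by
  have h := convexOn_exp.2 (Set.mem_univ 0) (Set.mem_univ (-b)) (sub_nonneg.2 hx.2) hx.1
    (sub_add_cancel 1 x)
  simp only [smul_eq_mul, mul_zero, zero_add, Real.exp_zero, mul_one] at h
  rw [mul_comm] at h
  linarith

section Catoni

variable {Θ Z : Type*} [MeasurableSpace Z]

def risk (L : Θ → Z → ℝ) (P : Measure Z) (θ : Θ) : ℝ := ∫ z, L θ z ∂P

def empiricalRisk (L : Θ → Z → ℝ) {m : ℕ} (s : Fin m → Z) (θ : Θ) : ℝ :=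
  (1 / (m : ℝ)) * ∑ i, L θ (s i)

def catoniExponent (b : ℝ) (L : Θ → Z → ℝ) (P : Measure Z) {m : ℕ} (s : Fin m → Z) (θ : Θ) :
    ℝ :=
  -(m * Real.log (1 - (1 - Real.exp (-b)) * risk L P θ)) + ∑ i, -b * L θ (s i)

variable {L : Θ → Z → ℝ} {P : Measure Z} [IsProbabilityMeasure P]

lemma risk_mem_Icc (hL01 : ∀ θ z, L θ z ∈ Set.Icc (0 : ℝ) 1) (θ : Θ) :
    risk L P θ ∈ Set.Icc (0 : ℝ) 1 := by
  refine ⟨integral_nonneg fun z => (hL01 θ z).1, ?_⟩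
  calc risk L P θ ≤ ∫ _, (1 : ℝ) ∂P :=
        integral_mono_of_nonneg (ae_of_all _ fun z => (hL01 θ z).1) (integrable_const 1)
          (ae_of_all _ fun z => (hL01 θ z).2)
    _ = 1 := by simp

lemma one_sub_mul_risk_pos (hL01 : ∀ θ z, L θ z ∈ Set.Icc (0 : ℝ) 1) (b : ℝ) (θ : Θ) :
    0 < 1 - (1 - Real.exp (-b)) * risk L P θ := by
  obtain ⟨hr0, hr1⟩ := risk_mem_Icc (P := P) hL01 θ
  have := Real.exp_pos (-b)
  rcases le_total (Real.exp (-b)) 1 with he | he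
  · nlinarith [mul_nonneg (sub_nonneg.2 hr1) (sub_nonneg.2 he)]
  · nlinarith [mul_nonneg hr0 (sub_nonneg.2 he)]

lemma catoniExponent_abs_le (hL01 : ∀ θ z, L θ z ∈ Set.Icc (0 : ℝ) 1) {b : ℝ} (hb : 0 ≤ b)
    {m : ℕ} (s : Fin m → Z) (θ : Θ) : |catoniExponent b L P s θ| ≤ m * b := by
  obtain ⟨hr0, hr1⟩ := risk_mem_Icc (P := P) hL01 θ
  have hpos := one_sub_mul_risk_pos (P := P) hL01 b θ
  have hc0 : 0 ≤ 1 - Real.exp (-b) := by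
    linarith [Real.exp_le_one_iff.2 (neg_nonpos.2 hb)]
  have hlog_nonpos : Real.log (1 - (1 - Real.exp (-b)) * risk L P θ) ≤ 0 :=
    Real.log_nonpos hpos.le (by nlinarith)
  have hlog_ge : -b ≤ Real.log (1 - (1 - Real.exp (-b)) * risk L P θ) := by
    rw [Real.le_log_iff_exp_le hpos]
    nlinarith [mul_nonneg hc0 (sub_nonneg.2 hr1)]
  have hsum_nonpos : ∑ i, -b * L θ (s i) ≤ 0 :=
    Finset.sum_nonpos fun i _ => by nlinarith [(hL01 θ (s i)).1]
  have hsum_ge : -(m * b) ≤ ∑ i, -b * L θ (s i) := by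
    calc -(m * b) = ∑ _i : Fin m, -b := by simp
      _ ≤ ∑ i, -b * L θ (s i) :=
          Finset.sum_le_sum fun i _ => by nlinarith [(hL01 θ (s i)).2]
  have hm : (0 : ℝ) ≤ m := Nat.cast_nonneg m
  rw [catoniExponent, abs_le]
  constructor <;> nlinarith

lemma norm_exp_catoniExponent_le (hL01 : ∀ θ z, L θ z ∈ Set.Icc (0 : ℝ) 1) {b : ℝ}
    (hb : 0 ≤ b) {m : ℕ} (s : Fin m → Z) (θ : Θ) :
    ‖Real.exp (catoniExponent b L P s θ)‖ ≤ Real.exp (m * b) := by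
  rw [Real.norm_of_nonneg (Real.exp_pos _).le, Real.exp_le_exp]
  exact (le_abs_self _).trans (catoniExponent_abs_le hL01 hb s θ)

lemma exp_catoniExponent (hL01 : ∀ θ z, L θ z ∈ Set.Icc (0 : ℝ) 1) (b : ℝ) {m : ℕ} (s : Fin m → Z)
    (θ : Θ) :
    Real.exp (catoniExponent b L P s θ)
      = ((1 - (1 - Real.exp (-b)) * risk L P θ) ^ m)⁻¹ * ∏ i, Real.exp (-b * L θ (s i)) := by
  rw [catoniExponent, Real.exp_add, Real.exp_neg, Real.exp_nat_mul,
    Real.exp_log (one_sub_mul_risk_pos hL01 b θ), Real.exp_sum]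

lemma mul_sub_le_catoniExponent (hL01 : ∀ θ z, L θ z ∈ Set.Icc (0 : ℝ) 1) (b : ℝ) {m : ℕ}
    (hm : 0 < m) (s : Fin m → Z) (θ : Θ) :
    m * ((1 - Real.exp (-b)) * risk L P θ - b * empiricalRisk L s θ)
      ≤ catoniExponent b L P s θ := by
  have hlog := Real.log_le_sub_one_of_pos (one_sub_mul_risk_pos (P := P) hL01 b θ)
  have hsum : (m : ℝ) * empiricalRisk L s θ = ∑ i, L θ (s i) := by
    rw [empiricalRisk, ← mul_assoc, mul_one_div_cancel (Nat.cast_ne_zero.2 hm.ne'), one_mul]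
  rw [catoniExponent, ← Finset.mul_sum, ← hsum]
  nlinarith [mul_le_mul_of_nonneg_left hlog (Nat.cast_nonneg (α := ℝ) m)]

variable [MeasurableSpace Θ]

lemma measurable_risk (hL : Measurable (Function.uncurry L)) : Measurable (risk L P) :=
  hL.stronglyMeasurable.integral_prod_right'.measurable

lemma measurable_catoniExponent (hL : Measurable (Function.uncurry L)) (b : ℝ) (m : ℕ) :
    Measurable fun p : Θ × (Fin m → Z) => catoniExponent b L P p.2 p.1 := by
  have hrisk : Measurable fun p : Θ × (Fin m → Z) => risk L P p.1 :=
    (measurable_risk hL).comp measurable_fst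
  refine ((measurable_const.sub (hrisk.const_mul _)).log.const_mul _).neg.add ?_
  refine Finset.measurable_sum _ fun i _ => Measurable.const_mul ?_ _
  exact hL.comp (measurable_fst.prodMk ((measurable_pi_apply i).comp measurable_snd))

lemma integrable_loss_apply (hL : Measurable (Function.uncurry L))
    (hL01 : ∀ θ z, L θ z ∈ Set.Icc (0 : ℝ) 1) (z : Z) (ρ : Measure Θ) [IsFiniteMeasure ρ] :
    Integrable (fun θ => L θ z) ρ :=
  Integrable.of_bound (hL.comp (measurable_id.prodMk measurable_const)).aestronglyMeasurable 1
    (ae_of_all _ fun θ => abs_le.2 ⟨by linarith [(hL01 θ z).1], (hL01 θ z).2⟩)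

lemma integrable_risk (hL : Measurable (Function.uncurry L))
    (hL01 : ∀ θ z, L θ z ∈ Set.Icc (0 : ℝ) 1) (ρ : Measure Θ) [IsFiniteMeasure ρ] :
    Integrable (risk L P) ρ :=
  Integrable.of_bound (measurable_risk hL).aestronglyMeasurable 1
    (ae_of_all _ fun θ => abs_le.2 ⟨by linarith [(risk_mem_Icc (P := P) hL01 θ).1],
      (risk_mem_Icc hL01 θ).2⟩)

lemma integrable_empiricalRisk (hL : Measurable (Function.uncurry L))
    (hL01 : ∀ θ z, L θ z ∈ Set.Icc (0 : ℝ) 1) {m : ℕ} (s : Fin m → Z) (ρ : Measure Θ)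
    [IsFiniteMeasure ρ] : Integrable (empiricalRisk L s) ρ :=
  (integrable_finsetSum _ fun i _ => integrable_loss_apply hL hL01 (s i) ρ).const_mul _

lemma integrable_catoniExponent (hL : Measurable (Function.uncurry L))
    (hL01 : ∀ θ z, L θ z ∈ Set.Icc (0 : ℝ) 1) {b : ℝ} (hb : 0 ≤ b) {m : ℕ} (s : Fin m → Z)
    (ρ : Measure Θ) [IsFiniteMeasure ρ] : Integrable (catoniExponent b L P s) ρ :=
  Integrable.of_bound ((measurable_catoniExponent hL b m).comp
      (measurable_id.prodMk measurable_const)).aestronglyMeasurable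
    (m * b) (ae_of_all _ fun θ => catoniExponent_abs_le hL01 hb s θ)

lemma integrable_exp_catoniExponent (hL : Measurable (Function.uncurry L))
    (hL01 : ∀ θ z, L θ z ∈ Set.Icc (0 : ℝ) 1) {b : ℝ} (hb : 0 ≤ b) {m : ℕ} (s : Fin m → Z)
    (ρ : Measure Θ) [IsFiniteMeasure ρ] :
    Integrable (fun θ => Real.exp (catoniExponent b L P s θ)) ρ :=
  Integrable.of_bound ((measurable_catoniExponent hL b m).comp
      (measurable_id.prodMk measurable_const)).exp.aestronglyMeasurable
    (Real.exp (m * b)) (ae_of_all _ fun θ => norm_exp_catoniExponent_le hL01 hb s θ)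

lemma integrable_exp_catoniExponent_prod (hL : Measurable (Function.uncurry L))
    (hL01 : ∀ θ z, L θ z ∈ Set.Icc (0 : ℝ) 1) {b : ℝ} (hb : 0 ≤ b) (m : ℕ) (π : Measure Θ)
    [IsFiniteMeasure π] :
    Integrable (fun p : Θ × (Fin m → Z) => Real.exp (catoniExponent b L P p.2 p.1))
      (π.prod (Measure.pi fun _ => P)) :=
  Integrable.of_bound (measurable_catoniExponent hL b m).exp.aestronglyMeasurable
    (Real.exp (m * b)) (ae_of_all _ fun p => norm_exp_catoniExponent_le hL01 hb p.2 p.1)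

lemma integral_exp_neg_mul_le (hL : Measurable (Function.uncurry L))
    (hL01 : ∀ θ z, L θ z ∈ Set.Icc (0 : ℝ) 1) (b : ℝ) (θ : Θ) :
    ∫ z, Real.exp (-b * L θ z) ∂P ≤ 1 - (1 - Real.exp (-b)) * risk L P θ := by
  have hLθ_int : Integrable (L θ) P :=
    Integrable.of_bound (hL.comp measurable_prodMk_left).aestronglyMeasurable 1
      (ae_of_all _ fun z => abs_le.2 ⟨by linarith [(hL01 θ z).1], (hL01 θ z).2⟩)
  calc ∫ z, Real.exp (-b * L θ z) ∂P ≤ ∫ z, 1 - (1 - Real.exp (-b)) * L θ z ∂P :=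
        integral_mono_of_nonneg (ae_of_all _ fun z => (Real.exp_pos _).le)
          ((integrable_const 1).sub (hLθ_int.const_mul _))
          (ae_of_all _ fun z => exp_neg_mul_le_one_sub_mul b (hL01 θ z))
    _ = 1 - (1 - Real.exp (-b)) * risk L P θ := by
        rw [integral_sub (integrable_const 1) (hLθ_int.const_mul _), integral_const_mul]
        simp [risk]

lemma integral_exp_catoniExponent_le_one (hL : Measurable (Function.uncurry L))
    (hL01 : ∀ θ z, L θ z ∈ Set.Icc (0 : ℝ) 1) (b : ℝ) (m : ℕ) (θ : Θ) :
    ∫ s, Real.exp (catoniExponent b L P s θ) ∂(Measure.pi fun _ : Fin m => P) ≤ 1 := by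
  have hy := one_sub_mul_risk_pos (P := P) hL01 b θ
  simp_rw [exp_catoniExponent hL01, integral_const_mul]
  rw [integral_fintype_prod_eq_pow (fun z => Real.exp (-b * L θ z)), Fintype.card_fin,
    inv_mul_le_iff₀ (pow_pos hy m), mul_one]
  exact pow_le_pow_left₀ (integral_nonneg fun _ => (Real.exp_pos _).le)
    (integral_exp_neg_mul_le hL hL01 b θ) m

lemma integral_integral_exp_catoniExponent_le_one (hL : Measurable (Function.uncurry L))
    (hL01 : ∀ θ z, L θ z ∈ Set.Icc (0 : ℝ) 1) {b : ℝ} (hb : 0 ≤ b) (m : ℕ) (π : Measure Θ)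
    [IsProbabilityMeasure π] :
    ∫ s, ∫ θ, Real.exp (catoniExponent b L P s θ) ∂π ∂(Measure.pi fun _ : Fin m => P) ≤ 1 := by
  rw [← integral_integral_swap (f := fun θ s => Real.exp (catoniExponent b L P s θ))
    (integrable_exp_catoniExponent_prod hL hL01 hb m π)]
  calc ∫ θ, ∫ s, Real.exp (catoniExponent b L P s θ) ∂(Measure.pi fun _ : Fin m => P) ∂π
      ≤ ∫ _, (1 : ℝ) ∂π :=
        integral_mono_of_nonneg
          (ae_of_all _ fun θ => integral_nonneg fun _ => (Real.exp_pos _).le)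
          (integrable_const 1) (ae_of_all _ (integral_exp_catoniExponent_le_one hL hL01 b m))
    _ = 1 := by simp

lemma integral_risk_le_of_integral_exp_catoniExponent_le (hL : Measurable (Function.uncurry L))
    (hL01 : ∀ θ z, L θ z ∈ Set.Icc (0 : ℝ) 1) {b : ℝ} (hb : 0 < b) {m : ℕ} (hm : 0 < m)
    {π : Measure Θ} [IsProbabilityMeasure π] {δ : ℝ} {s : Fin m → Z}
    (hs : ∫ θ, Real.exp (catoniExponent b L P s θ) ∂π ≤ 1 / δ)
    {ρ : Measure Θ} [IsProbabilityMeasure ρ] (hρπ : ρ ≪ π) (h_int : Integrable (llr ρ π) ρ) :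
    ∫ θ, risk L P θ ∂ρ ≤ b / (1 - Real.exp (-b)) * (∫ θ, empiricalRisk L s θ ∂ρ
      + (∫ θ, llr ρ π θ ∂ρ + Real.log (1 / δ)) / (m * b)) := by
  set c := 1 - Real.exp (-b) with hc_def
  set R := ∫ θ, risk L P θ ∂ρ
  set E := ∫ θ, empiricalRisk L s θ ∂ρ
  set B := ∫ θ, llr ρ π θ ∂ρ + Real.log (1 / δ)
  have hc : 0 < c := by rw [hc_def, sub_pos, Real.exp_lt_one_iff]; linarith
  have hm' : (0 : ℝ) < m := Nat.cast_pos.2 hm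
  have h_exp_int := integrable_exp_catoniExponent (P := P) hL hL01 hb.le s π
  have h_dv : ∫ θ, catoniExponent b L P s θ ∂ρ ≤ B :=
    (integral_le_integral_llr_add_log_integral_exp hρπ
      (integrable_catoniExponent hL hL01 hb.le s ρ) h_exp_int h_int).trans
      (add_le_add_right (Real.log_le_log (integral_exp_pos h_exp_int) hs) _)
  have h_lower : m * (c * R - b * E) ≤ ∫ θ, catoniExponent b L P s θ ∂ρ :=
    calc m * (c * R - b * E) = ∫ θ, m * (c * risk L P θ - b * empiricalRisk L s θ) ∂ρ := by
          rw [integral_const_mul, integral_sub ((integrable_risk hL hL01 ρ).const_mul _)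
            ((integrable_empiricalRisk hL hL01 s ρ).const_mul _), integral_const_mul,
            integral_const_mul]
      _ ≤ ∫ θ, catoniExponent b L P s θ ∂ρ :=
          integral_mono ((((integrable_risk hL hL01 ρ).const_mul _).sub
            ((integrable_empiricalRisk hL hL01 s ρ).const_mul _)).const_mul _)
            (integrable_catoniExponent hL hL01 hb.le s ρ) (mul_sub_le_catoniExponent hL01 b hm s)
  have h_key : c * R - b * E ≤ B / m := by
    rw [le_div_iff₀ hm']
    linarith
  have h_rhs : b / c * (E + B / (m * b)) = (b * E + B / m) / c := by
    field_simp
  rw [h_rhs, le_div_iff₀ hc]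
  linarith

theorem catoni_pac_bayes_bound (hL : Measurable (Function.uncurry L))
    (hL01 : ∀ θ z, L θ z ∈ Set.Icc (0 : ℝ) 1) (P : Measure Z) [IsProbabilityMeasure P]
    (π : Measure Θ) [IsProbabilityMeasure π] {m : ℕ} (hm : 0 < m) {δ : ℝ} (hδ : 0 < δ) {b : ℝ}
    (hb : 0 < b) :
    ENNReal.ofReal (1 - δ) ≤ (Measure.pi fun _ : Fin m => P)
      {s | ∀ ρ : Measure Θ, IsProbabilityMeasure ρ → ρ ≪ π → Integrable (llr ρ π) ρ →
        ∫ θ, risk L P θ ∂ρ ≤ b / (1 - Real.exp (-b)) * (∫ θ, empiricalRisk L s θ ∂ρ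
          + (∫ θ, llr ρ π θ ∂ρ + Real.log (1 / δ)) / (m * b))} := by
  refine (ofReal_one_sub_le_measure_lt_one_div_of_integral_le_one
    (A := fun s => ∫ θ, Real.exp (catoniExponent b L P s θ) ∂π)
    (ae_of_all _ fun s => integral_nonneg fun _ => (Real.exp_pos _).le)
    (integrable_exp_catoniExponent_prod hL hL01 hb.le m π).integral_prod_right
    (integral_integral_exp_catoniExponent_le_one hL hL01 hb.le m π) hδ).trans (measure_mono ?_)
  intro s hs ρ _ hρπ h_int
  exact integral_risk_le_of_integral_exp_catoniExponent_le hL hL01 hb hm hs.le hρπ h_int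

end Catoni

def jointLoss {α β : Type*} (F : α → β → Bool) (p : α × α) (z : β × Bool) : ℝ :=
  l01 (F p.1 z.1) z.2 * l01 (F p.2 z.1) z.2

lemma l01_mem_Icc (a b : Bool) : l01 a b ∈ Set.Icc (0 : ℝ) 1 := by
  unfold l01
  split_ifs <;> norm_num

lemma jointLoss_mem_Icc {α β : Type*} (F : α → β → Bool) (p : α × α) (z : β × Bool) :
    jointLoss F p z ∈ Set.Icc (0 : ℝ) 1 :=
  ⟨mul_nonneg (l01_mem_Icc _ _).1 (l01_mem_Icc _ _).1,
    mul_le_one₀ (l01_mem_Icc _ _).2 (l01_mem_Icc _ _).1 (l01_mem_Icc _ _).2⟩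

lemma measurable_jointLoss {F : H → X → Bool} (hF : Measurable (Function.uncurry F)) :
    Measurable (Function.uncurry (jointLoss F)) := by
  have hl01 : Measurable (Function.uncurry l01) := measurable_of_countable _
  have hF₁ : Measurable fun w : (H × H) × (X × Bool) => F w.1.1 w.2.1 :=
    hF.comp (f := fun w : (H × H) × (X × Bool) => (w.1.1, w.2.1)) (by fun_prop)
  have hF₂ : Measurable fun w : (H × H) × (X × Bool) => F w.1.2 w.2.1 :=
    hF.comp (f := fun w : (H × H) × (X × Bool) => (w.1.2, w.2.1)) (by fun_prop)
  exact (hl01.comp (hF₁.prodMk measurable_snd.snd)).mul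
    (hl01.comp (hF₂.prodMk measurable_snd.snd))

/-- Corollary 1(ii) (generalization bound on the source expected joint error): for any source
domain `S` over `X×Y`, any prior `π` on `H`, any `δ ∈ (0,1]` and any `b > 0`, with probability
at least `1−δ` over an i.i.d. `m_s`-sample from `S`, simultaneously for every posterior `ρ`
on `H` (with `KL(ρ‖π) < ∞`):
`e_S(ρ) ≤ (b/(1−e^{−b})) · [ ê_S(ρ) + (2·KL(ρ‖π) + ln(1/δ))/(m_s·b) ]`. -/
theorem joint_error_generalization_bound
    (F : H → X → Bool) (hF : Measurable (Function.uncurry F))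
    (S : Measure (X × Bool)) [IsProbabilityMeasure S]
    (π : Measure H) [IsProbabilityMeasure π]
    (ms : ℕ) (hms : 0 < ms)
    (δ : ℝ) (hδ : δ ∈ Set.Ioc (0 : ℝ) 1)
    (b : ℝ) (hb : 0 < b) :
    (Measure.pi fun _ : Fin ms => S)
      {s | ∀ ρ : Measure H, IsProbabilityMeasure ρ → ρ ≪ π →
        Integrable (llr ρ π) ρ →
        jointErr F S ρ
          ≤ (b / (1 - Real.exp (-b))) *
              ((∫ p, (1 / (ms : ℝ)) *
                  ∑ i : Fin ms, l01 (F p.1 (s i).1) (s i).2 * l01 (F p.2 (s i).1) (s i).2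
                  ∂(ρ.prod ρ))
                + (2 * klReal ρ π + Real.log (1 / δ)) / ((ms : ℝ) * b))}
      ≥ ENNReal.ofReal (1 - δ) := by
  refine (catoni_pac_bayes_bound (measurable_jointLoss hF) (jointLoss_mem_Icc F) S (π.prod π)
    hms hδ.1 hb).trans (measure_mono fun s hs ρ _ hρπ h_int => ?_)
  have h := hs (ρ.prod ρ) inferInstance (hρπ.prod hρπ) (integrable_llr_prod hρπ hρπ h_int h_int)
  rwa [integral_llr_prod hρπ hρπ h_int h_int, ← two_mul] at h

end
end
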